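/- Let k be a field, and let φ1, φ2 be continuous k-algebra automorphisms of k[[t]] (substitutions φi(t) ∈ t·k[[t]] with unit linear coefficient). The induced automorphism (g1,g2) ↦ (g1∘φ1, g2∘φ2) of k[[t]] × k[[t]] maps the oscnode algebra R = {(g1,g2) : g1 ≡ g2 mod t^3} into itself if and only if φ1(t) ≡ φ2(t) mod t^3. -/

import Mathlib

open PowerSeries

variable (k : Type*) [Field k]

/-- Pairs of power series whose coefficients agree in all degrees `< n`;
for `n = 3` this is the oscnode (A₅) algebra. -/
noncomputable def agree (n : ℕ) : Submodule k (PowerSeries k × PowerSeries k) where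
  carrier := {p | ∀ i < n, coeff (R := k) i p.1 = coeff (R := k) i p.2}
  add_mem' := by
    intro a b ha hb i hi
    simp [ha i hi, hb i hi]
  zero_mem' := by intro i hi; simp
  smul_mem' := by
    intro c p hp i hi
    simp [hp i hi]

/-- Substitution `g ↦ g(u)` for a power series `u` with zero constant term. -/
noncomputable def subst (u g : PowerSeries k) : PowerSeries k :=
  PowerSeries.mk fun m =>
    coeff (R := k) m (∑ n ∈ Finset.range (m + 1), coeff (R := k) n g • u ^ n)

namespace Oscnode

variable {k}

theorem coeff_subst (u g : PowerSeries k) (i : ℕ) :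
    coeff i (subst k u g) = ∑ n ∈ Finset.range (i + 1), coeff n g * coeff i (u ^ n) := by
  simp [_root_.subst, coeff_mk, map_sum]

theorem subst_X {u : PowerSeries k} (h0 : coeff 0 u = 0) : subst k u X = u := by
  ext i
  rw [coeff_subst, Finset.sum_eq_single 1 (fun n _ hn => by simp [coeff_X, hn])]
  · simp
  · intro h1
    obtain rfl : i = 0 := by simpa using h1
    simp [h0]

theorem X_pow_dvd_sub_iff {N : ℕ} {f g : PowerSeries k} :
    X ^ N ∣ f - g ↔ ∀ i < N, coeff i f = coeff i g := by
  simp only [X_pow_dvd_iff, map_sub, sub_eq_zero]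

theorem subst_mem_agree {N : ℕ} {u₁ u₂ : PowerSeries k}
    (hu : ∀ i < N, coeff i u₁ = coeff i u₂) {p : PowerSeries k × PowerSeries k}
    (hp : p ∈ agree k N) : (subst k u₁ p.1, subst k u₂ p.2) ∈ agree k N := by
  intro i hi
  simp only [coeff_subst]
  refine Finset.sum_congr rfl fun n hn => ?_
  have hpow : X ^ N ∣ u₁ ^ n - u₂ ^ n :=
    (X_pow_dvd_sub_iff.2 hu).trans (sub_dvd_pow_sub_pow u₁ u₂ n)
  rw [hp n (by simp at hn; omega), X_pow_dvd_sub_iff.1 hpow i hi]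

end Oscnode

open Oscnode in
theorem stmt_11 (u₁ u₂ : PowerSeries k)
    (h₁0 : coeff (R := k) 0 u₁ = 0) (h₂0 : coeff (R := k) 0 u₂ = 0) :
    (∀ p ∈ agree k 3,
        ((subst k u₁ p.1, subst k u₂ p.2) : PowerSeries k × PowerSeries k) ∈ agree k 3) ↔
      ∀ i < 3, coeff (R := k) i u₁ = coeff (R := k) i u₂ := by
  refine ⟨fun H => ?_, fun hu _ hp => subst_mem_agree hu hp⟩
  have hX := H (X, X) fun _ _ => rfl
  rwa [subst_X h₁0, subst_X h₂0] at hX
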